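/- Let A be a periodic abelian group with trivial 2-component and with no cocyclic p-components. Let ε₁, ε₂ be commuting extremal involutions belonging to the same p-component with A_{ε₂} ⊆ A_{ε₁}^⊥, and set C = A_{ε₁}^⊥ ∩ A_{ε₂}^⊥, so that A = A_{ε₁} ⊕ A_{ε₂} ⊕ C. Then an automorphism x ∈ Aut A lies in the center of the centralizer of {ε₁, ε₂} in Aut A if and only if x preserves each of A_{ε₁}, A_{ε₂} and C, and the restriction of x to C lies in the center of Aut C (while the restrictions of x to A_{ε₁} and to A_{ε₂} are arbitrary automorphisms of these summands). -/

import Mathlib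

/-- The `p`-component of an abelian group: the subgroup of elements of `p`-power order. -/
def pComponent (A : Type*) [AddCommGroup A] (p : ℕ) : AddSubgroup A where
  carrier := {a | ∃ n : ℕ, p ^ n • a = 0}
  zero_mem' := ⟨0, smul_zero _⟩
  add_mem' := by
    rintro a b ⟨n, hn⟩ ⟨m, hm⟩
    refine ⟨n + m, ?_⟩
    have ha : p ^ (n + m) • a = 0 := by
      rw [pow_add, mul_comm, mul_smul, hn, smul_zero]
    have hb : p ^ (n + m) • b = 0 := by
      rw [pow_add, mul_smul, hm, smul_zero]
    rw [smul_add, ha, hb, add_zero]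
  neg_mem' := by
    rintro a ⟨n, hn⟩
    exact ⟨n, by rw [smul_neg, hn, neg_zero]⟩


/-- A nontrivial abelian group is cocyclic if it has a nontrivial subgroup contained in
every nontrivial subgroup. -/
def IsCocyclic (G : Type*) [AddCommGroup G] : Prop :=
  ∃ H : AddSubgroup G, H ≠ ⊥ ∧ ∀ K : AddSubgroup G, K ≠ ⊥ → H ≤ K

/-- For an involution `ε`, the subgroup `A_ε^+ = {a | ε a = a}` of fixed points. -/
def posPart {A : Type*} [AddCommGroup A] (ε : AddAut A) : AddSubgroup A where
  carrier := {a | ε a = a}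
  zero_mem' := map_zero ε
  add_mem' := by
    intro a b ha hb
    simp only [Set.mem_setOf_eq] at *
    rw [map_add, ha, hb]
  neg_mem' := by
    intro a ha
    simp only [Set.mem_setOf_eq] at *
    rw [map_neg, ha]

/-- For an involution `ε`, the subgroup `A_ε^- = {a | ε a = -a}`. -/
def negPart {A : Type*} [AddCommGroup A] (ε : AddAut A) : AddSubgroup A where
  carrier := {a | ε a = -a}
  zero_mem' := by simp
  add_mem' := by
    intro a b ha hb
    simp only [Set.mem_setOf_eq] at *
    rw [map_add, ha, hb, neg_add]
  neg_mem' := by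
    intro a ha
    simp only [Set.mem_setOf_eq] at *
    rw [map_neg, ha]

/-- A subgroup is indecomposable if it is nonzero and is not the (internal) direct sum
of two nonzero subgroups. -/
def Indecomp {A : Type*} [AddCommGroup A] (B : AddSubgroup A) : Prop :=
  B ≠ ⊥ ∧ ¬ ∃ C D : AddSubgroup A, C ≠ ⊥ ∧ D ≠ ⊥ ∧ C ⊓ D = ⊥ ∧ C ⊔ D = B

/-- The multiplicative group structure on `AddAut A` (composition), as in the older Mathlib. -/
instance AddAut.group {A : Type*} [AddCommGroup A] : Group (AddAut A) where
  mul g h := AddEquiv.trans h g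
  one := AddEquiv.refl _
  inv := AddEquiv.symm
  mul_assoc _ _ _ := rfl
  one_mul _ := rfl
  mul_one _ := rfl
  inv_mul_cancel := AddEquiv.self_trans_symm

/-- `ExtremalWith ε B Bp` says that `ε` is an extremal involution whose indecomposable
summand `A_ε` is `B` and whose complementary summand `A_ε^⊥` is `Bp`: `ε² = 1`, `B` is
one of the two summands `A_ε^+`, `A_ε^-` (and `Bp` the other one), and `B` is
indecomposable. -/
def ExtremalWith {A : Type*} [AddCommGroup A] (ε : AddAut A) (B Bp : AddSubgroup A) :
    Prop :=
  ε * ε = 1 ∧ Indecomp B ∧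
    ((B = posPart ε ∧ Bp = negPart ε) ∨ (B = negPart ε ∧ Bp = posPart ε))

/-- An involution is extremal if one of its two summands is indecomposable. -/
def IsExtremal {A : Type*} [AddCommGroup A] (ε : AddAut A) : Prop :=
  ∃ B Bp : AddSubgroup A, ExtremalWith ε B Bp

/-- `x` maps the subgroup `S` onto itself (in both directions), so that `x` restricts to
an automorphism of `S`. -/
def Preserves {A : Type*} [AddCommGroup A] (x : AddAut A) (S : AddSubgroup A) : Prop :=
  (∀ a ∈ S, x a ∈ S) ∧ (∀ a ∈ S, x.symm a ∈ S)

/-- `x` preserves the subgroup `S` and its restriction to `S` lies in the center of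
`Aut S`, i.e. it commutes with every automorphism of `S`. -/
def CentralOn {A : Type*} [AddCommGroup A] (x : AddAut A) (S : AddSubgroup A) : Prop :=
  ∃ h : Preserves x S,
    ∀ (g : AddAut ↥S) (a : ↥S), x ↑(g a) = ↑(g ⟨x ↑a, h.1 ↑a a.2⟩)

/-- `μ` is a *quasi-transvection* on the commuting extremal involutions `(ε₁, ε₂)`,
where `D = A_{ε₁}^⊥ ⊓ A_{ε₂}^⊥` is the complement of `A_{ε₁} ⊕ A_{ε₂}`: the restriction
of `μ` to `D` is central in `Aut D`, `μ² ≠ 1`, `ε₁με₁μ = 1`, and `μ` commutes with all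
its conjugates `dμd⁻¹` for `d` in the center of the centralizer of `{ε₁, ε₂}`. -/
def QTransv {A : Type*} [AddCommGroup A] (ε₁ ε₂ : AddAut A) (D : AddSubgroup A)
    (μ : AddAut A) : Prop :=
  CentralOn μ D ∧ μ * μ ≠ 1 ∧ ε₁ * μ * ε₁ * μ = 1 ∧
    ∀ d : AddAut A,
      (d ∈ Subgroup.centralizer {ε₁, ε₂} ∧
        ∀ y ∈ Subgroup.centralizer {ε₁, ε₂}, d * y = y * d) →
      (d * μ * d⁻¹) * μ = μ * (d * μ * d⁻¹)

/-!
An involution `ε` of `A` splits `A = A_ε^+ ⊕ A_ε^-` because `A` is torsion without `2`-torsion,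
and an automorphism commutes with `ε` iff it preserves both summands. For commuting `ε₁, ε₂` with
`A_{ε₂} ⊆ A_{ε₁}^⊥` this gives `A = A_{ε₁} ⊕ A_{ε₂} ⊕ C`, and the centralizer of `{ε₁, ε₂}`
consists of the automorphisms preserving the three summands. Every automorphism of `C`, extended
by the identity on `A_{ε₁} ⊕ A_{ε₂}`, lies in this centralizer; hence a central `x` restricts to a
central automorphism of `C`. Conversely, two automorphisms preserving `A_{ε₁}` commute on it: an
indecomposable `p`-group is locally cyclic (a socle element of finite height yields a cyclic
summand; otherwise the group is divisible and the union of a chain of `p`-th roots is a summand),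
and in a locally cyclic `p`-group an endomorphism sends each `b` to a multiple of `b`, since the
order of the image divides that of `b`.
-/

open AddSubgroup

section Involution

variable {A : Type*} [AddCommGroup A]

theorem eq_zero_of_two_nsmul_eq_zero (h2 : pComponent A 2 = ⊥) {a : A} (ha : 2 • a = 0) :
    a = 0 := by
  have : a ∈ pComponent A 2 := ⟨1, by rwa [pow_one]⟩
  rwa [h2, mem_bot] at this

theorem exists_two_mul_nsmul_eq (hA : IsAddTorsion A) (h2 : pComponent A 2 = ⊥) (a : A) :
    ∃ m : ℕ, (2 * m) • a = a := by
  obtain ⟨k, hk⟩ : Odd (addOrderOf a) := by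
    rw [← Nat.not_even_iff_odd]
    rintro ⟨k, hk⟩
    have hka : k • a = 0 := eq_zero_of_two_nsmul_eq_zero h2 (by
      rw [smul_smul, two_mul, ← hk, addOrderOf_nsmul_eq_zero])
    have hpos := (hA a).addOrderOf_pos
    have := Nat.eq_zero_of_dvd_of_lt (addOrderOf_dvd_of_nsmul_eq_zero hka) (by omega)
    omega
  refine ⟨k + 1, ?_⟩
  rw [show 2 * (k + 1) = addOrderOf a + 1 by omega, succ_nsmul, addOrderOf_nsmul_eq_zero, zero_add]

theorem disjoint_posPart_negPart (h2 : pComponent A 2 = ⊥) (ε : AddAut A) :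
    Disjoint (posPart ε) (negPart ε) := by
  refine disjoint_def.mpr fun {a} (hpos : ε a = a) (hneg : ε a = -a) => ?_
  refine eq_zero_of_two_nsmul_eq_zero h2 ?_
  rw [two_nsmul]
  nth_rw 1 [← hpos]
  rw [hneg, neg_add_cancel]

theorem inf_posPart_sup_inf_negPart (hA : IsAddTorsion A) (h2 : pComponent A 2 = ⊥)
    {ε : AddAut A} (hε : ε * ε = 1) {S : AddSubgroup A} (hS : Set.MapsTo ε S S) :
    S ⊓ posPart ε ⊔ S ⊓ negPart ε = S := by
  refine le_antisymm (sup_le inf_le_left inf_le_left) fun a ha => ?_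
  have hεε : ε (ε a) = a := DFunLike.congr_fun hε a
  obtain ⟨m, hm⟩ := exists_two_mul_nsmul_eq hA h2 a
  have hsplit : m • (a + ε a) + m • (a - ε a) = a := by
    rw [← smul_add, add_add_sub_cancel, ← two_nsmul, smul_smul, mul_comm, hm]
  rw [← hsplit]
  refine add_mem_sup ⟨nsmul_mem (add_mem ha (hS ha)) m, ?_⟩ ⟨nsmul_mem (sub_mem ha (hS ha)) m, ?_⟩
  · change ε (m • (a + ε a)) = m • (a + ε a)
    rw [map_nsmul, map_add, hεε, add_comm]
  · change ε (m • (a - ε a)) = -(m • (a - ε a))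
    rw [map_nsmul, map_sub, hεε, ← smul_neg, neg_sub]

theorem mul_comm_iff_mapsTo (hA : IsAddTorsion A) (h2 : pComponent A 2 = ⊥)
    {ε : AddAut A} (hε : ε * ε = 1) (y : AddAut A) :
    y * ε = ε * y ↔
      Set.MapsTo y (posPart ε) (posPart ε) ∧ Set.MapsTo y (negPart ε) (negPart ε) := by
  refine ⟨fun h => ?_, fun ⟨hpos, hneg⟩ => ?_⟩
  · have hy (a : A) : y (ε a) = ε (y a) := DFunLike.congr_fun h a
    refine ⟨fun a (ha : ε a = a) => ?_, fun a (ha : ε a = -a) => ?_⟩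
    · change ε (y a) = y a
      rw [← hy, ha]
    · change ε (y a) = -y a
      rw [← hy, ha, map_neg]
  · ext a
    have ha : a ∈ posPart ε ⊔ negPart ε := by
      simpa using (inf_posPart_sup_inf_negPart hA h2 hε (Set.mapsTo_univ ε _)).ge (mem_top a)
    obtain ⟨b, hb, c, hc, rfl⟩ := mem_sup.mp ha
    change y (ε (b + c)) = ε (y (b + c))
    rw [map_add, hb, hc, map_add y, map_neg, map_add y, map_add ε, hpos hb, hneg hc]

theorem ExtremalWith.isCompl (hA : IsAddTorsion A) (h2 : pComponent A 2 = ⊥) {ε : AddAut A}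
    {B Bp : AddSubgroup A} (hε : ExtremalWith ε B Bp) : IsCompl B Bp := by
  have hcod : posPart ε ⊔ negPart ε = ⊤ := by
    simpa using inf_posPart_sup_inf_negPart hA h2 hε.1 (S := ⊤) (Set.mapsTo_univ ε _)
  rcases hε.2.2 with ⟨rfl, rfl⟩ | ⟨rfl, rfl⟩
  · exact ⟨disjoint_posPart_negPart h2 ε, codisjoint_iff.mpr hcod⟩
  · exact ⟨(disjoint_posPart_negPart h2 ε).symm, codisjoint_iff.mpr (by rwa [sup_comm])⟩

theorem ExtremalWith.inf_sup_inf (hA : IsAddTorsion A) (h2 : pComponent A 2 = ⊥)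
    {ε : AddAut A} {B Bp S : AddSubgroup A} (hε : ExtremalWith ε B Bp) (hS : Set.MapsTo ε S S) :
    S ⊓ B ⊔ S ⊓ Bp = S := by
  rcases hε.2.2 with ⟨rfl, rfl⟩ | ⟨rfl, rfl⟩
  · exact inf_posPart_sup_inf_negPart hA h2 hε.1 hS
  · rw [sup_comm]
    exact inf_posPart_sup_inf_negPart hA h2 hε.1 hS

theorem ExtremalWith.mul_comm_iff (hA : IsAddTorsion A) (h2 : pComponent A 2 = ⊥)
    {ε : AddAut A} {B Bp : AddSubgroup A} (hε : ExtremalWith ε B Bp) (y : AddAut A) :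
    y * ε = ε * y ↔ Set.MapsTo y B B ∧ Set.MapsTo y Bp Bp := by
  rcases hε.2.2 with ⟨rfl, rfl⟩ | ⟨rfl, rfl⟩
  · exact mul_comm_iff_mapsTo hA h2 hε.1 y
  · rw [and_comm]
    exact mul_comm_iff_mapsTo hA h2 hε.1 y

end Involution

section Complement

variable {A : Type*} [AddCommGroup A]

theorem IsCompl.exists_addAut_extend {S T : AddSubgroup A} (h : IsCompl S T) (g : AddAut S) :
    ∃ g' : AddAut A, (∀ s : S, g' s = g s) ∧ ∀ t ∈ T, g' t = t := by
  have hST := toIntSubmodule.isCompl h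
  set e := Submodule.prodEquivOfIsCompl _ _ hST
  let gS : AddAut (toIntSubmodule S) := g
  refine ⟨e.symm.toAddEquiv.trans ((gS.prodCongr (AddEquiv.refl _)).trans e.toAddEquiv),
    fun s => ?_, fun t ht => ?_⟩
  · have hs : e.symm s = ((s : toIntSubmodule S), 0) :=
      Submodule.prodEquivOfIsCompl_symm_apply_left _ _ hST s
    change e (gS.prodCongr (AddEquiv.refl _) (e.symm s)) = g s
    rw [hs]
    exact add_zero _
  · have ht : e.symm t = (0, (⟨t, ht⟩ : toIntSubmodule T)) :=
      Submodule.prodEquivOfIsCompl_symm_apply_right _ _ hST ⟨t, ht⟩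
    change e (gS.prodCongr (AddEquiv.refl _) (e.symm t)) = t
    rw [ht]
    change ((gS 0 : toIntSubmodule S) : A) + t = t
    rw [map_zero, ZeroMemClass.coe_zero, zero_add]

def Preserves.restrict {y : AddAut A} {S : AddSubgroup A} (h : Preserves y S) : AddAut S where
  toFun a := ⟨y (a : A), h.1 a a.2⟩
  invFun a := ⟨y.symm (a : A), h.2 a a.2⟩
  left_inv a := Subtype.ext (y.symm_apply_apply (a : A))
  right_inv a := Subtype.ext (y.apply_symm_apply (a : A))
  map_add' a b := Subtype.ext (map_add y (a : A) b)

theorem AddSubgroup.mapsTo_sup {F : Type*} [FunLike F A A] [AddMonoidHomClass F A A] {f : F}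
    {S T : AddSubgroup A} (hS : Set.MapsTo f S S) (hT : Set.MapsTo f T T) :
    Set.MapsTo f ↑(S ⊔ T) ↑(S ⊔ T) := by
  intro a ha
  obtain ⟨s, hs, t, ht, rfl⟩ := mem_sup.mp ha
  rw [map_add]
  exact add_mem_sup (hS hs) (hT ht)

end Complement

section CommutingExtremal

variable {A : Type*} [AddCommGroup A] {ε₁ ε₂ : AddAut A} {B₁ B₁p B₂ B₂p : AddSubgroup A}

theorem ExtremalWith.le_compl_of_commute (hA : IsAddTorsion A) (h2 : pComponent A 2 = ⊥)
    (hε₁ : ExtremalWith ε₁ B₁ B₁p) (hε₂ : ExtremalWith ε₂ B₂ B₂p) (hcomm : ε₁ * ε₂ = ε₂ * ε₁)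
    (hBB : B₂ ≤ B₁p) : B₁ ≤ B₂p := by
  have hB₁ := ((hε₁.mul_comm_iff hA h2 ε₂).mp hcomm.symm).1
  have hB₁B₂ : B₁ ⊓ B₂ = ⊥ :=
    eq_bot_iff.mpr ((inf_le_inf_left B₁ hBB).trans (hε₁.isCompl hA h2).disjoint.le_bot)
  rw [← hε₂.inf_sup_inf hA h2 hB₁, hB₁B₂, bot_sup_eq]
  exact inf_le_right

theorem ExtremalWith.sup_inf_compl_eq_compl₁ (hA : IsAddTorsion A) (h2 : pComponent A 2 = ⊥)
    (hε₁ : ExtremalWith ε₁ B₁ B₁p) (hε₂ : ExtremalWith ε₂ B₂ B₂p) (hcomm : ε₁ * ε₂ = ε₂ * ε₁)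
    (hBB : B₂ ≤ B₁p) : B₂ ⊔ B₁p ⊓ B₂p = B₁p := by
  have hB₁p := ((hε₁.mul_comm_iff hA h2 ε₂).mp hcomm.symm).2
  conv_rhs => rw [← hε₂.inf_sup_inf hA h2 hB₁p]
  rw [inf_eq_right.mpr hBB]

theorem ExtremalWith.sup_inf_compl_eq_compl₂ (hA : IsAddTorsion A) (h2 : pComponent A 2 = ⊥)
    (hε₁ : ExtremalWith ε₁ B₁ B₁p) (hε₂ : ExtremalWith ε₂ B₂ B₂p) (hcomm : ε₁ * ε₂ = ε₂ * ε₁)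
    (hBB : B₂ ≤ B₁p) : B₁ ⊔ B₁p ⊓ B₂p = B₂p := by
  have hB₂p := ((hε₂.mul_comm_iff hA h2 ε₁).mp hcomm).2
  conv_rhs => rw [← hε₁.inf_sup_inf hA h2 hB₂p]
  rw [inf_eq_right.mpr (hε₁.le_compl_of_commute hA h2 hε₂ hcomm hBB), inf_comm]

theorem ExtremalWith.isCompl_inf_compl_sup (hA : IsAddTorsion A) (h2 : pComponent A 2 = ⊥)
    (hε₁ : ExtremalWith ε₁ B₁ B₁p) (hε₂ : ExtremalWith ε₂ B₂ B₂p) (hcomm : ε₁ * ε₂ = ε₂ * ε₁)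
    (hBB : B₂ ≤ B₁p) : IsCompl (B₁p ⊓ B₂p) (B₁ ⊔ B₂) := by
  have hB₁p := hε₁.sup_inf_compl_eq_compl₁ hA h2 hε₂ hcomm hBB
  have hC₁ := hε₁.isCompl hA h2
  refine ⟨?_, codisjoint_iff.mpr ?_⟩
  · rw [sup_comm]
    refine Disjoint.disjoint_sup_right_of_disjoint_sup_left ?_ ?_
    · exact (hε₂.isCompl hA h2).disjoint.symm.mono_left inf_le_right
    · rw [sup_comm, hB₁p]
      exact hC₁.disjoint.symm
  · rw [sup_comm, sup_assoc, hB₁p, hC₁.sup_eq_top]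

theorem ExtremalWith.mem_centralizer_pair_iff (hA : IsAddTorsion A) (h2 : pComponent A 2 = ⊥)
    (hε₁ : ExtremalWith ε₁ B₁ B₁p) (hε₂ : ExtremalWith ε₂ B₂ B₂p) (hcomm : ε₁ * ε₂ = ε₂ * ε₁)
    (hBB : B₂ ≤ B₁p) (y : AddAut A) :
    y ∈ Subgroup.centralizer {ε₁, ε₂} ↔
      Set.MapsTo y B₁ B₁ ∧ Set.MapsTo y B₂ B₂ ∧ Set.MapsTo y ↑(B₁p ⊓ B₂p) ↑(B₁p ⊓ B₂p) := by
  simp only [Subgroup.mem_centralizer_iff, Set.mem_insert_iff, Set.mem_singleton_iff,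
    forall_eq_or_imp, forall_eq, eq_comm (a := _ * y), hε₁.mul_comm_iff hA h2,
    hε₂.mul_comm_iff hA h2]
  constructor
  · rintro ⟨⟨h₁, h₁p⟩, h₂, h₂p⟩
    exact ⟨h₁, h₂, fun a ha => ⟨h₁p ha.1, h₂p ha.2⟩⟩
  · rintro ⟨h₁, h₂, hC⟩
    refine ⟨⟨h₁, ?_⟩, h₂, ?_⟩
    · rw [← hε₁.sup_inf_compl_eq_compl₁ hA h2 hε₂ hcomm hBB]
      exact mapsTo_sup h₂ hC
    · rw [← hε₁.sup_inf_compl_eq_compl₂ hA h2 hε₂ hcomm hBB]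
      exact mapsTo_sup h₁ hC

end CommutingExtremal

section PrimaryComponent

variable {A : Type*} [AddCommGroup A] {p : ℕ}

theorem mem_zmultiples_zsmul_of_not_dvd (hp : p.Prime) {a : A} (ha : a ∈ pComponent A p)
    {t : ℤ} (ht : ¬ (p : ℤ) ∣ t) : a ∈ zmultiples (t • a) := by
  obtain ⟨k, hk⟩ := ha
  obtain ⟨α, β, hαβ⟩ : IsCoprime t ((p : ℤ) ^ k) :=
    (((Nat.prime_iff_prime_int.mp hp).coprime_iff_not_dvd.mpr ht).pow_left).symm
  have hk' : ((p : ℤ) ^ k) • a = 0 := by exact_mod_cast hk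
  refine mem_zmultiples_iff.mpr ⟨α, ?_⟩
  calc α • t • a = (α * t + β * (p : ℤ) ^ k) • a := by
        rw [add_smul, mul_smul β, hk', smul_zero, add_zero, mul_smul]
    _ = a := by rw [hαβ, one_smul]

theorem mem_zmultiples_of_addOrderOf_dvd (hp : p.Prime) {w x y : A} (hw : w ∈ pComponent A p)
    (hx : x ∈ zmultiples w) (hy : y ∈ zmultiples w) (hxy : addOrderOf y ∣ addOrderOf x) :
    y ∈ zmultiples x := by
  obtain ⟨s, rfl⟩ := mem_zmultiples_iff.mp hx
  obtain ⟨t, rfl⟩ := mem_zmultiples_iff.mp hy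
  by_cases hx0 : s • w = 0
  · rw [hx0, addOrderOf_zero, Nat.dvd_one, AddMonoid.addOrderOf_eq_one_iff] at hxy
    rw [hxy]
    exact zero_mem _
  obtain ⟨k, hk⟩ := hw
  obtain ⟨K, -, hK⟩ := (Nat.dvd_prime_pow hp).mp (addOrderOf_dvd_of_nsmul_eq_zero hk)
  have hw0 : ∀ z : ℤ, z • w = 0 ↔ (p : ℤ) ^ K ∣ z := fun z => by
    rw [← addOrderOf_dvd_iff_zsmul_eq_zero, hK]
    push_cast
    rfl
  have hs0 : s ≠ 0 := by rintro rfl; exact hx0 (zero_smul ℤ w)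
  obtain ⟨u, hsu, hu⟩ := (Int.finiteMultiplicity_iff (a := (p : ℤ)).mpr
    ⟨by simpa using hp.ne_one, hs0⟩).exists_eq_pow_mul_and_not_dvd
  set i := multiplicity (p : ℤ) s
  have hiK : i ≤ K := by
    by_contra! hKi
    exact hx0 ((hw0 s).mpr (hsu ▸ (pow_dvd_pow _ hKi.le).mul_right u))
  have hgen : ((p : ℤ) ^ i) • w ∈ zmultiples (s • w) := by
    have hpi : ((p : ℤ) ^ i) • w ∈ pComponent A p := ⟨k, by rw [smul_comm, hk, smul_zero]⟩
    simpa only [smul_smul, mul_comm u, ← hsu] using mem_zmultiples_zsmul_of_not_dvd hp hpi hu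
  have hpow : ((p : ℤ) ^ K) = (p : ℤ) ^ (K - i) * (p : ℤ) ^ i := by
    rw [← pow_add, Nat.sub_add_cancel hiK]
  have hsK : ((p : ℤ) ^ (K - i)) • (s • w) = 0 := by
    rw [smul_smul, hw0, hsu, ← mul_assoc, hpow]
    exact dvd_mul_right _ _
  have htK : ((p : ℤ) ^ (K - i)) • (t • w) = 0 := by
    rw [← addOrderOf_dvd_iff_zsmul_eq_zero] at hsK ⊢
    exact (Int.natCast_dvd_natCast.mpr hxy).trans hsK
  rw [smul_smul, hw0, hpow] at htK
  obtain ⟨t', rfl⟩ := (mul_dvd_mul_iff_left (pow_ne_zero _ (by exact_mod_cast hp.ne_zero))).mp htK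
  rw [mul_comm, mul_smul]
  exact zsmul_mem (zmultiples_le.mpr hgen (mem_zmultiples _)) t'

theorem AddSubgroup.exists_maximal_disjoint {B W C₀ : AddSubgroup A} (hC₀B : C₀ ≤ B)
    (hC₀W : Disjoint C₀ W) : ∃ C, C₀ ≤ C ∧ Maximal (fun C => C ≤ B ∧ Disjoint C W) C := by
  refine zorn_le_nonempty₀ _ (fun c hc hchain D hD => ⟨sSup c, ?_, fun E => le_sSup⟩) C₀
    ⟨hC₀B, hC₀W⟩
  refine ⟨sSup_le fun E hE => (hc hE).1, disjoint_def.mpr fun {a} ha haW => ?_⟩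
  obtain ⟨E, hE, haE⟩ := (mem_sSup_of_directedOn ⟨D, hD⟩ hchain.directedOn).mp ha
  exact disjoint_def.mp (hc hE).2 haE haW

theorem sup_eq_of_maximal_disjoint (hp : p.Prime) {B W C : AddSubgroup A}
    (hB : B ≤ pComponent A p) (hWB : W ≤ B) (hC : Maximal (fun C => C ≤ B ∧ Disjoint C W) C)
    (hH : ∀ b ∈ B, p • b ∈ W ⊔ C → ∃ w ∈ W, p • b - p • w ∈ C) :
    W ⊔ C = B := by
  refine le_antisymm (sup_le hWB hC.1.1) fun b hb => ?_
  by_contra hbWC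
  obtain ⟨j, hj, hj1⟩ := Nat.exists_not_and_succ_of_not_zero_of_exists
    (p := fun j => p ^ j • b ∈ W ⊔ C) (by simpa using hbWC)
    (by obtain ⟨k, hk⟩ := hB hb; exact ⟨k, by simp only [hk, zero_mem]⟩)
  have hb₁ : p ^ j • b ∈ B := nsmul_mem hb _
  obtain ⟨w, hw, hwC⟩ := hH _ hb₁ (by rwa [smul_smul, ← pow_succ'])
  set b' := p ^ j • b - w
  have hb'B : b' ∈ B := sub_mem hb₁ (hWB hw)
  have hpb' : p • b' ∈ C := by rwa [smul_sub]
  have hb' : b' ∉ W ⊔ C := fun h => hj (by simpa [b'] using add_mem h (mem_sup_left hw))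
  -- `C + ⟨b'⟩` is strictly larger than `C`, so it meets `W`
  obtain ⟨a, ha, haW, ha0⟩ : ∃ a ∈ C ⊔ zmultiples b', a ∈ W ∧ a ≠ 0 := by
    by_contra! hdis
    refine hb' (mem_sup_right (hC.2 ⟨sup_le hC.1.1 (zmultiples_le.mpr hb'B), disjoint_def.mpr ?_⟩
      le_sup_left (mem_sup_right (mem_zmultiples b'))))
    exact fun ha haW => hdis _ ha haW
  obtain ⟨c, hc, _, htb, rfl⟩ := mem_sup.mp ha
  obtain ⟨t, rfl⟩ := mem_zmultiples_iff.mp htb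
  by_cases hpt : (p : ℤ) ∣ t
  · obtain ⟨t', rfl⟩ := hpt
    refine ha0 (disjoint_def.mp hC.1.2 (add_mem hc ?_) haW)
    rw [mul_comm, mul_smul, natCast_zsmul]
    exact zsmul_mem hpb' _
  · have htb' : t • b' ∈ W ⊔ C := by
      simpa using sub_mem (mem_sup_left haW) (mem_sup_right hc : c ∈ W ⊔ C)
    exact hb' (zmultiples_le.mpr htb' (mem_zmultiples_zsmul_of_not_dvd hp (hB hb'B) hpt))

theorem Indecomp.eq_of_sup_eq {B W C : AddSubgroup A} (hB : Indecomp B) (hW : W ≠ ⊥)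
    (hWC : Disjoint W C) (hsup : W ⊔ C = B) : W = B := by
  by_contra hWB
  have hC : C ≠ ⊥ := by rintro rfl; exact hWB (by simpa using hsup)
  exact hB.2 ⟨W, C, hW, hC, hWC.eq_bot, hsup⟩

end PrimaryComponent

section Indecomposable

variable {A : Type*} [AddCommGroup A] {p : ℕ} {B : AddSubgroup A}

theorem exists_nsmul_eq_of_forall_socle (hB : B ≤ pComponent A p)
    (h : ∀ u ∈ B, p • u = 0 → ∀ n : ℕ, ∃ v ∈ B, p ^ n • v = u) {b : A} (hb : b ∈ B) :
    ∃ v ∈ B, p • v = b := by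
  obtain ⟨k, hk⟩ := hB hb
  induction k generalizing b with
  | zero => exact ⟨0, zero_mem B, by simp_all⟩
  | succ k ih =>
    obtain ⟨v, hvB, hv⟩ := h _ (nsmul_mem hb _) (by rwa [smul_smul, ← pow_succ']) (k + 1)
    obtain ⟨v', hv'B, hv'⟩ := ih (sub_mem hb (nsmul_mem hvB p))
      (by rw [smul_sub, smul_smul, ← pow_succ, hv, sub_self])
    exact ⟨v + v', add_mem hvB hv'B, by rw [smul_add, hv', add_sub_cancel]⟩

/-- `⟨w⟩` is a summand of `B` when its socle `⟨p ^ n • w⟩` has height exactly `n` in `B`. -/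
theorem Indecomp.zmultiples_eq (hp : p.Prime) (hInd : Indecomp B) (hB : B ≤ pComponent A p)
    {w : A} {n : ℕ} (hwB : w ∈ B) (hu0 : p ^ n • w ≠ 0) (hpu : p • p ^ n • w = 0)
    (hht : ∀ v ∈ B, p ^ (n + 1) • v ≠ p ^ n • w) :
    zmultiples w = B := by
  have := Fact.mk hp
  set u := p ^ n • w
  have huW : u ∈ zmultiples w := nsmul_mem (mem_zmultiples w) (p ^ n)
  have hWB : zmultiples w ≤ B := zmultiples_le.mpr hwB
  set C₀ := B.map (nsmulAddMonoidHom (p ^ (n + 1)))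
  have hC₀B : C₀ ≤ B := by
    rintro _ ⟨v, hv, rfl⟩
    exact nsmul_mem hv _
  have hC₀W : Disjoint C₀ (zmultiples w) := by
    refine disjoint_def.mpr fun {a} haC haW => ?_
    by_contra ha0
    obtain ⟨k, hk0, hk⟩ := Nat.exists_not_and_succ_of_not_zero_of_exists
      (p := fun k => p ^ k • a = 0) (by simpa using ha0) (hB (hC₀B haC))
    -- `p ^ k • a` and `u` both have order `p` in the cyclic group `⟨w⟩`
    have hord : addOrderOf u ∣ addOrderOf (p ^ k • a) := by
      rw [addOrderOf_eq_prime hpu hu0,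
        addOrderOf_eq_prime (x := p ^ k • a) (by rwa [smul_smul, ← pow_succ']) hk0]
    obtain ⟨v, hv, hvu⟩ := zmultiples_le.mpr (nsmul_mem haC _)
      (mem_zmultiples_of_addOrderOf_dvd hp (hB hwB) (nsmul_mem haW _) huW hord)
    exact hht v hv hvu
  obtain ⟨C, hC₀C, hC⟩ := exists_maximal_disjoint hC₀B hC₀W
  refine Indecomp.eq_of_sup_eq hInd (fun h => hu0 ?_) hC.1.2.symm
    (sup_eq_of_maximal_disjoint hp hB hWB hC fun b hb hpb => ?_)
  · simpa [h] using huW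
  obtain ⟨_, hsw, c, hc, hsum⟩ := mem_sup.mp hpb
  obtain ⟨s, rfl⟩ := mem_zmultiples_iff.mp hsw
  have hsuC : s • u ∈ C := by
    have : s • u = p ^ (n + 1) • b - p ^ n • c := by
      rw [pow_succ, mul_smul, ← hsum, smul_add, add_sub_cancel_right, smul_comm]
    rw [this]
    exact sub_mem (hC₀C ⟨b, hb, rfl⟩) (nsmul_mem hc _)
  have hsu : s • u = 0 := disjoint_def.mp hC.1.2 hsuC (zsmul_mem huW s)
  obtain ⟨s', rfl⟩ : (p : ℤ) ∣ s := by
    by_contra hs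
    have := mem_zmultiples_zsmul_of_not_dvd hp (hB (hWB huW)) hs
    rw [hsu, zmultiples_zero_eq_bot, mem_bot] at this
    exact hu0 this
  refine ⟨s' • w, zsmul_mem (mem_zmultiples w) s', ?_⟩
  rwa [← natCast_zsmul (s' • w) p, smul_smul, ← hsum, add_sub_cancel_left]

theorem monotone_zmultiples_of_nsmul_succ {x : ℕ → A} (hx : ∀ m, p • x (m + 1) = x m) :
    Monotone fun m => zmultiples (x m) :=
  monotone_nat_of_le_succ fun m => zmultiples_le.mpr (hx m ▸ nsmul_mem (mem_zmultiples _) p)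

/-- The union of a chain `x 0 = p • x 1, x 1 = p • x 2, …` is `p`-divisible, hence a summand. -/
theorem Indecomp.iSup_zmultiples_eq (hp : p.Prime) (hInd : Indecomp B)
    (hB : B ≤ pComponent A p) {x : ℕ → A} (hx : ∀ m, p • x (m + 1) = x m) (hxB : ∀ m, x m ∈ B)
    (hx0 : x 0 ≠ 0) :
    ⨆ m, zmultiples (x m) = B := by
  have hmem (a : A) : a ∈ ⨆ m, zmultiples (x m) ↔ ∃ m, a ∈ zmultiples (x m) :=
    mem_iSup_of_directed (monotone_zmultiples_of_nsmul_succ hx).directed_le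
  obtain ⟨C, -, hC⟩ := exists_maximal_disjoint (B := B) (W := ⨆ m, zmultiples (x m)) bot_le
    disjoint_bot_left
  refine Indecomp.eq_of_sup_eq hInd (fun h => hx0 ?_) hC.1.2.symm
    (sup_eq_of_maximal_disjoint hp hB (iSup_le fun m => zmultiples_le.mpr (hxB m)) hC
      fun b _ hpb => ?_)
  · simpa [h] using (hmem (x 0)).mpr ⟨0, mem_zmultiples _⟩
  obtain ⟨_, ha, c, hc, hsum⟩ := mem_sup.mp hpb
  obtain ⟨m, ham⟩ := (hmem _).mp ha
  obtain ⟨s, rfl⟩ := mem_zmultiples_iff.mp ham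
  refine ⟨s • x (m + 1), (hmem _).mpr ⟨m + 1, zsmul_mem (mem_zmultiples _) s⟩, ?_⟩
  rwa [smul_comm, hx, ← hsum, add_sub_cancel_left]

theorem Indecomp.exists_mem_zmultiples (hp : p.Prime) (hInd : Indecomp B)
    (hB : B ≤ pComponent A p) {a b : A} (ha : a ∈ B) (hb : b ∈ B) :
    ∃ w ∈ B, a ∈ zmultiples w ∧ b ∈ zmultiples w := by
  by_cases hfin : ∃ u ∈ B, p • u = 0 ∧ ∃ N : ℕ, ∀ v ∈ B, p ^ N • v ≠ u
  · -- a nonzero socle element of finite height: `B` is cyclic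
    obtain ⟨u, huB, hpu, hN⟩ := hfin
    obtain ⟨n, hn, hn1⟩ := Nat.exists_not_and_succ_of_not_zero_of_exists
      (p := fun n => ∀ v ∈ B, p ^ n • v ≠ u) (fun h => h u huB (one_nsmul u)) hN
    push Not at hn
    obtain ⟨w, hwB, rfl⟩ := hn
    have hu0 : p ^ n • w ≠ 0 := fun h => hn1 0 (zero_mem B) (by rw [smul_zero, h])
    have hW := hInd.zmultiples_eq hp hB hwB hu0 hpu hn1
    exact ⟨w, hwB, hW ▸ ha, hW ▸ hb⟩
  · -- all socle elements have infinite height: `B` is divisible, a union of cyclic groups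
    push Not at hfin
    choose d hdB hd using fun b (hb : b ∈ B) => exists_nsmul_eq_of_forall_socle hB hfin hb
    obtain ⟨x₀, hx₀B, hx₀⟩ := (bot_or_exists_ne_zero B).resolve_left hInd.1
    let x : ℕ → B := fun m => (fun v : B => (⟨d v v.2, hdB v v.2⟩ : B))^[m] ⟨x₀, hx₀B⟩
    have hx (m : ℕ) : p • (x (m + 1) : A) = x m := by
      simp only [x, Function.iterate_succ_apply']
      exact hd _ _
    have hW := hInd.iSup_zmultiples_eq hp hB hx (fun m => (x m).2) hx₀
    have hmono := monotone_zmultiples_of_nsmul_succ (x := fun m => (x m : A)) hx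
    obtain ⟨i, hi⟩ := (mem_iSup_of_directed hmono.directed_le).mp (hW ▸ ha)
    obtain ⟨j, hj⟩ := (mem_iSup_of_directed hmono.directed_le).mp (hW ▸ hb)
    exact ⟨x (max i j), (x _).2, hmono (le_max_left i j) hi, hmono (le_max_right i j) hj⟩

variable {F : Type*} [FunLike F A A] [AddMonoidHomClass F A A]

theorem Indecomp.map_mem_zmultiples (hp : p.Prime) (hInd : Indecomp B)
    (hB : B ≤ pComponent A p) {f : F} {b : A} (hb : b ∈ B) (hfb : f b ∈ B) :
    f b ∈ zmultiples b := by
  obtain ⟨w, hwB, hbw, hfbw⟩ := hInd.exists_mem_zmultiples hp hB hb hfb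
  exact mem_zmultiples_of_addOrderOf_dvd hp (hB hwB) hbw hfbw (addOrderOf_map_dvd (f : A →+ A) b)

theorem Indecomp.map_map_comm (hp : p.Prime) (hInd : Indecomp B) (hB : B ≤ pComponent A p)
    {f g : F} (hf : Set.MapsTo f B B) (hg : Set.MapsTo g B B) {b : A} (hb : b ∈ B) :
    f (g b) = g (f b) := by
  obtain ⟨s, hs⟩ := mem_zmultiples_iff.mp (hInd.map_mem_zmultiples hp hB hb (hf hb))
  obtain ⟨t, ht⟩ := mem_zmultiples_iff.mp (hInd.map_mem_zmultiples hp hB hb (hg hb))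
  rw [← hs, ← ht, map_zsmul, map_zsmul, ← hs, ← ht, smul_comm]

end Indecomposable

theorem mem_center_centralizer_iff_general
    (A : Type*) [AddCommGroup A] (hA : AddMonoid.IsTorsion A)
    (h2 : pComponent A 2 = ⊥)
    (p : ℕ) (hp : p.Prime)
    (ε₁ ε₂ : AddAut A) (B₁ B₁p B₂ B₂p : AddSubgroup A)
    (hε₁ : ExtremalWith ε₁ B₁ B₁p) (hε₂ : ExtremalWith ε₂ B₂ B₂p)
    (hcomm : ε₁ * ε₂ = ε₂ * ε₁)
    (hc₁ : B₁ ≤ pComponent A p) (hc₂ : B₂ ≤ pComponent A p)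
    (hBB : B₂ ≤ B₁p)
    (x : AddAut A) :
    (x ∈ Subgroup.centralizer {ε₁, ε₂} ∧
        ∀ y ∈ Subgroup.centralizer {ε₁, ε₂}, x * y = y * x) ↔
      (Preserves x B₁ ∧ Preserves x B₂ ∧ CentralOn x (B₁p ⊓ B₂p)) := by
  have hZ := hε₁.mem_centralizer_pair_iff hA h2 hε₂ hcomm hBB
  have hcompl := hε₁.isCompl_inf_compl_sup hA h2 hε₂ hcomm hBB
  have hpres {y} (hy : y ∈ Subgroup.centralizer {ε₁, ε₂}) :
      Preserves y B₁ ∧ Preserves y B₂ ∧ Preserves y (B₁p ⊓ B₂p) := by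
    obtain ⟨h₁, h₂, hC⟩ := (hZ y).mp hy
    obtain ⟨h₁', h₂', hC'⟩ := (hZ y⁻¹).mp (inv_mem hy)
    exact ⟨⟨h₁, h₁'⟩, ⟨h₂, h₂'⟩, ⟨hC, hC'⟩⟩
  constructor
  · rintro ⟨hx, hxZ⟩
    obtain ⟨h₁, h₂, hC⟩ := hpres hx
    refine ⟨h₁, h₂, hC, fun g a => ?_⟩
    obtain ⟨g', hg'C, hg'B⟩ := hcompl.exists_addAut_extend g
    have hg' : g' ∈ Subgroup.centralizer {ε₁, ε₂} := by
      refine (hZ g').mpr ⟨fun b hb => ?_, fun b hb => ?_, fun c hc => ?_⟩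
      · rwa [hg'B b (mem_sup_left hb)]
      · rwa [hg'B b (mem_sup_right hb)]
      · change g' c ∈ B₁p ⊓ B₂p
        rw [hg'C ⟨c, hc⟩]
        exact (g _).2
    have := DFunLike.congr_fun (hxZ g' hg') (a : A)
    change x (g' a) = g' (x a) at this
    rw [← hg'C a, ← hg'C ⟨x a, _⟩]
    exact this
  · rintro ⟨h₁, h₂, hC, hxC⟩
    have hx : x ∈ Subgroup.centralizer {ε₁, ε₂} :=
      (hZ x).mpr ⟨h₁.1, h₂.1, hC.1⟩
    refine ⟨hx, fun y hy => ?_⟩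
    obtain ⟨hy₁, hy₂, hyC⟩ := hpres hy
    ext a
    change x (y a) = y (x a)
    obtain ⟨c, hc, b, hb, rfl⟩ := mem_sup.mp (hcompl.sup_eq_top ▸ mem_top a)
    obtain ⟨b₁, hb₁, b₂, hb₂, rfl⟩ := mem_sup.mp hb
    simp only [map_add]
    rw [hε₁.2.1.map_map_comm hp hc₁ h₁.1 hy₁.1 hb₁, hε₂.2.1.map_map_comm hp hc₂ h₂.1 hy₂.1 hb₂]
    congr 1
    exact hxC hyC.restrict ⟨c, hc⟩

/-- Let `A` be a periodic abelian group with trivial `2`-component and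
no cocyclic `p`-components, and let `ε₁, ε₂` be commuting extremal involutions in the
same `p`-component with `A_{ε₂} ⊆ A_{ε₁}^⊥`; set `C = A_{ε₁}^⊥ ∩ A_{ε₂}^⊥`.  Then
`x ∈ Aut A` lies in the center of the centralizer of `{ε₁, ε₂}` if and only if `x`
preserves each of `A_{ε₁}`, `A_{ε₂}` and `C`, and the restriction of `x` to `C` lies in
the center of `Aut C` (the restrictions to `A_{ε₁}` and `A_{ε₂}` being arbitrary). -/
theorem mem_center_centralizer_iff
    (A : Type*) [AddCommGroup A] (hA : AddMonoid.IsTorsion A)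
    (h2 : pComponent A 2 = ⊥)
    (hcc : ∀ p : ℕ, p.Prime → ¬ IsCocyclic ↥(pComponent A p))
    (p : ℕ) (hp : p.Prime)
    (ε₁ ε₂ : AddAut A) (B₁ B₁p B₂ B₂p : AddSubgroup A)
    (hε₁ : ExtremalWith ε₁ B₁ B₁p) (hε₂ : ExtremalWith ε₂ B₂ B₂p)
    (hcomm : ε₁ * ε₂ = ε₂ * ε₁)
    (hc₁ : B₁ ≤ pComponent A p) (hc₂ : B₂ ≤ pComponent A p)
    (hBB : B₂ ≤ B₁p)
    (x : AddAut A) :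
    (x ∈ Subgroup.centralizer {ε₁, ε₂} ∧
        ∀ y ∈ Subgroup.centralizer {ε₁, ε₂}, x * y = y * x) ↔
      (Preserves x B₁ ∧ Preserves x B₂ ∧ CentralOn x (B₁p ⊓ B₂p)) :=
  mem_center_centralizer_iff_general A hA h2 p hp ε₁ ε₂ B₁ B₁p B₂ B₂p hε₁ hε₂ hcomm hc₁ hc₂ hBB x
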